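/- arXiv:1103.6243 — 2 statements merged into one kernel-verified Lean document; each statement's English description precedes it below -/
import Mathlib

section
/- Let H be a split exact functor from locally convex algebras to abelian groups, and let φ, ψ : A → B be continuous algebra homomorphisms that are orthogonal, i.e. φ(a)ψ(a′) = 0 = ψ(a)φ(a′) for all a, a′ ∈ A (so that φ + ψ is again a homomorphism). Then H(φ + ψ) = H(φ) + H(ψ). -/
/-!  A framework for locally convex algebras, split exact functors,
quasihomomorphisms and locally convex Kasparov modules, following
M. Grensing, "Universal cycles and homological invariants of locally convex
algebras". -/

noncomputable section

open scoped Topology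

/-- A locally convex algebra: a complete locally convex topological vector
space over `ℂ` together with a continuous associative bilinear multiplication. -/
structure LCA : Type 1 where
  carrier : Type
  [ring : NonUnitalRing carrier]
  [modC : Module ℂ carrier]
  [modR : Module ℝ carrier]
  [towerRC : IsScalarTower ℝ ℂ carrier]
  [towerC : IsScalarTower ℂ carrier carrier]
  [commC : SMulCommClass ℂ carrier carrier]
  [us : UniformSpace carrier]
  [uag : IsUniformAddGroup carrier]
  [csmul : ContinuousSMul ℂ carrier]
  [cmul : ContinuousMul carrier]
  [cmplt : CompleteSpace carrier]
  [lcs : LocallyConvexSpace ℝ carrier]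

attribute [instance] LCA.ring LCA.modC LCA.modR LCA.towerRC LCA.towerC LCA.commC
  LCA.us LCA.uag LCA.csmul LCA.cmul LCA.cmplt LCA.lcs

instance (A : LCA) : Nonempty A.carrier := ⟨0⟩

/-- Morphisms of locally convex algebras: continuous `ℂ`-algebra homomorphisms. -/
structure LCAHom (A B : LCA) where
  toFun : A.carrier → B.carrier
  map_add' : ∀ x y, toFun (x + y) = toFun x + toFun y
  map_mul' : ∀ x y, toFun (x * y) = toFun x * toFun y
  map_smul' : ∀ (c : ℂ) (x), toFun (c • x) = c • toFun x
  cont' : Continuous toFun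

namespace LCAHom

protected def id (A : LCA) : LCAHom A A :=
  ⟨fun x => x, fun _ _ => rfl, fun _ _ => rfl, fun _ _ => rfl, continuous_id⟩

def comp {A B C : LCA} (g : LCAHom B C) (f : LCAHom A B) : LCAHom A C where
  toFun := fun x => g.toFun (f.toFun x)
  map_add' := fun x y => by (try simp only []); rw [f.map_add', g.map_add']
  map_mul' := fun x y => by (try simp only []); rw [f.map_mul', g.map_mul']
  map_smul' := fun c x => by (try simp only []); rw [f.map_smul', g.map_smul']
  cont' := g.cont'.comp f.cont'

protected lemma map_zero {A B : LCA} (f : LCAHom A B) : f.toFun 0 = 0 := by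
  have h := f.map_add' 0 0
  rw [add_zero] at h
  exact (left_eq_add.mp h)

/-- The underlying (non-unital) `ℂ`-algebra homomorphism. -/
def toNA {A B : LCA} (f : LCAHom A B) : A.carrier →ₙₐ[ℂ] B.carrier where
  toFun := f.toFun
  map_add' := f.map_add'
  map_mul' := f.map_mul'
  map_smul' := f.map_smul'
  map_zero' := f.map_zero

end LCAHom

/-- A functor from locally convex algebras to abelian groups. -/
structure LCFunctor where
  obj : LCA → Type
  [ab : ∀ A, AddCommGroup (obj A)]
  map : ∀ {A B : LCA}, LCAHom A B → (obj A →+ obj B)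
  map_id : ∀ A : LCA, map (LCAHom.id A) = AddMonoidHom.id (obj A)
  map_comp : ∀ {A B C : LCA} (f : LCAHom A B) (g : LCAHom B C),
      map (g.comp f) = (map g).comp (map f)

attribute [instance] LCFunctor.ab

/-- A short exact sequence of locally convex algebras which is split by a
continuous algebra homomorphism. -/
structure SplitExactSeq (C B A : LCA) where
  ι : LCAHom C B
  π : LCAHom B A
  σ : LCAHom A B
  ι_inj : Function.Injective ι.toFun
  π_surj : Function.Surjective π.toFun
  exact : ∀ b, π.toFun b = 0 ↔ b ∈ Set.range ι.toFun
  is_split : ∀ a, π.toFun (σ.toFun a) = a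

/-- A functor is split exact if it maps split exact sequences of locally convex
algebras to (split) exact sequences of abelian groups. -/
def LCFunctor.IsSplitExact (H : LCFunctor) : Prop :=
  ∀ ⦃C B A : LCA⦄ (E : SplitExactSeq C B A),
    Function.Injective (H.map E.ι) ∧ Function.Surjective (H.map E.π) ∧
      ∀ x, H.map E.π x = 0 ↔ x ∈ Set.range (H.map E.ι)

/-- A double split extension of locally convex algebras: a split short exact
sequence together with a second splitting. -/
structure DoubleSplitSeq (B D A : LCA) where
  ι : LCAHom B D
  π : LCAHom D A
  σ : LCAHom A D
  σ' : LCAHom A D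
  ι_inj : Function.Injective ι.toFun
  π_surj : Function.Surjective π.toFun
  exact : ∀ d, π.toFun d = 0 ↔ d ∈ Set.range ι.toFun
  is_split : ∀ a, π.toFun (σ.toFun a) = a
  is_split' : ∀ a, π.toFun (σ'.toFun a) = a

/-- The morphism `H(σ,σ̄) = H(ι)⁻¹ ∘ (H(σ) - H(σ̄))` induced by a double split
extension under a (split exact) functor `H`. -/
def DoubleSplitSeq.induced {B D A : LCA} (E : DoubleSplitSeq B D A) (H : LCFunctor) :
    H.obj A → H.obj B :=
  fun x => Function.invFun (H.map E.ι) (H.map E.σ x - H.map E.σ' x)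

/-! ### Statement 3: split exact functors are additive on orthogonal homomorphisms -/

/-- The sum `φ + ψ` of two orthogonal homomorphisms is again a homomorphism. -/
def orthSum {A B : LCA} (φ ψ : LCAHom A B)
    (h : ∀ a a', φ.toFun a * ψ.toFun a' = 0 ∧ ψ.toFun a * φ.toFun a' = 0) :
    LCAHom A B where
  toFun a := φ.toFun a + ψ.toFun a
  map_add' := fun x y => by (try simp only []); rw [φ.map_add', ψ.map_add']; abel
  map_mul' := fun x y => by
    try simp only []
    rw [φ.map_mul', ψ.map_mul', add_mul, mul_add, mul_add, (h x y).1, (h x y).2]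
    abel
  map_smul' := fun c x => by (try simp only []); rw [φ.map_smul', ψ.map_smul', smul_add]
  cont' := φ.cont'.add ψ.cont'

/-! Split exactness applied to `0 → A → A × B → B → 0` gives `H(A × B) = H(A) ⊕ H(B)`,
with `y = H(inl) H(fst) y + H(inr) H(snd) y`. Orthogonality makes `(a, a') ↦ φ a + ψ a'` a
homomorphism `A × A → B`, and `φ + ψ` is this map composed with the diagonal, so applying `H`
to the factorisation splits `H(φ + ψ)` into `H(φ) + H(ψ)`. -/

namespace LCAHom

@[ext]
protected lemma ext {A B : LCA} {f g : LCAHom A B} (h : ∀ a, f.toFun a = g.toFun a) :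
    f = g := by
  cases f; cases g; congr; exact funext h

end LCAHom

namespace LCA

def punit : LCA where
  carrier := PUnit

instance : Subsingleton punit.carrier := inferInstanceAs (Subsingleton PUnit)

def prod (A B : LCA) : LCA where
  carrier := A.carrier × B.carrier

end LCA

namespace LCAHom

def toPUnit (A : LCA) : LCAHom A LCA.punit where
  toFun _ := 0
  map_add' _ _ := Subsingleton.elim _ _
  map_mul' _ _ := Subsingleton.elim _ _
  map_smul' _ _ := Subsingleton.elim _ _
  cont' := continuous_const

def fromPUnit (B : LCA) : LCAHom LCA.punit B where
  toFun _ := 0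
  map_add' _ _ := (add_zero 0).symm
  map_mul' _ _ := (mul_zero 0).symm
  map_smul' c _ := (smul_zero c).symm
  cont' := continuous_const

lemma eq_fromPUnit_comp_toPUnit {A B : LCA} {f : LCAHom A B} (hf : ∀ a, f.toFun a = 0) :
    f = (fromPUnit B).comp (toPUnit A) :=
  LCAHom.ext hf

variable (A B : LCA)

def fst : LCAHom (A.prod B) A where
  toFun p := p.1
  map_add' _ _ := rfl
  map_mul' _ _ := rfl
  map_smul' _ _ := rfl
  cont' := continuous_fst

def snd : LCAHom (A.prod B) B where
  toFun p := p.2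
  map_add' _ _ := rfl
  map_mul' _ _ := rfl
  map_smul' _ _ := rfl
  cont' := continuous_snd

def inl : LCAHom A (A.prod B) where
  toFun a := (a, 0)
  map_add' _ _ := Prod.ext rfl (add_zero 0).symm
  map_mul' _ _ := Prod.ext rfl (mul_zero 0).symm
  map_smul' c _ := Prod.ext rfl (smul_zero c).symm
  cont' := continuous_id.prodMk continuous_const

def inr : LCAHom B (A.prod B) where
  toFun b := (0, b)
  map_add' _ _ := Prod.ext (add_zero 0).symm rfl
  map_mul' _ _ := Prod.ext (mul_zero 0).symm rfl
  map_smul' c _ := Prod.ext (smul_zero c).symm rfl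
  cont' := continuous_const.prodMk continuous_id

variable {A B}

def prod {C : LCA} (f : LCAHom C A) (g : LCAHom C B) : LCAHom C (A.prod B) where
  toFun c := (f.toFun c, g.toFun c)
  map_add' x y := Prod.ext (f.map_add' x y) (g.map_add' x y)
  map_mul' x y := Prod.ext (f.map_mul' x y) (g.map_mul' x y)
  map_smul' c x := Prod.ext (f.map_smul' c x) (g.map_smul' c x)
  cont' := f.cont'.prodMk g.cont'

def coprod {A' : LCA} (φ : LCAHom A B) (ψ : LCAHom A' B)
    (h : ∀ a a', φ.toFun a * ψ.toFun a' = 0 ∧ ψ.toFun a' * φ.toFun a = 0) :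
    LCAHom (A.prod A') B where
  toFun p := φ.toFun p.1 + ψ.toFun p.2
  map_add' x y := by
    change φ.toFun (x.1 + y.1) + ψ.toFun (x.2 + y.2) = _
    rw [φ.map_add', ψ.map_add']
    abel
  map_mul' x y := by
    change φ.toFun (x.1 * y.1) + ψ.toFun (x.2 * y.2) = _
    rw [φ.map_mul', ψ.map_mul', add_mul, mul_add, mul_add, (h x.1 y.2).1, (h y.1 x.2).2]
    abel
  map_smul' c x := by
    change φ.toFun (c • x.1) + ψ.toFun (c • x.2) = _
    rw [φ.map_smul', ψ.map_smul', smul_add]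
  cont' := (φ.cont'.comp continuous_fst).add (ψ.cont'.comp continuous_snd)

section coprod

variable {A' : LCA} (φ : LCAHom A B) (ψ : LCAHom A' B)
  (h : ∀ a a', φ.toFun a * ψ.toFun a' = 0 ∧ ψ.toFun a' * φ.toFun a = 0)

lemma coprod_comp_inl : (coprod φ ψ h).comp (inl A A') = φ :=
  LCAHom.ext fun a => by
    change φ.toFun a + ψ.toFun 0 = φ.toFun a
    rw [ψ.map_zero, add_zero]

lemma coprod_comp_inr : (coprod φ ψ h).comp (inr A A') = ψ :=
  LCAHom.ext fun a => by
    change φ.toFun 0 + ψ.toFun a = ψ.toFun a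
    rw [φ.map_zero, zero_add]

end coprod

end LCAHom

namespace SplitExactSeq

def punit : SplitExactSeq LCA.punit LCA.punit LCA.punit where
  ι := LCAHom.id _
  π := LCAHom.id _
  σ := LCAHom.id _
  ι_inj _ _ h := h
  π_surj a := ⟨a, rfl⟩
  exact b := ⟨fun _ => ⟨b, rfl⟩, fun _ => Subsingleton.elim _ _⟩
  is_split _ := rfl

def prod (A B : LCA) : SplitExactSeq A (A.prod B) B where
  ι := LCAHom.inl A B
  π := LCAHom.snd A B
  σ := LCAHom.inr A B
  ι_inj _ _ h := congrArg Prod.fst h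
  π_surj b := ⟨(0, b), rfl⟩
  exact p := ⟨fun h => ⟨p.1, Prod.ext rfl h.symm⟩, fun ⟨_, ha⟩ => ha ▸ rfl⟩
  is_split _ := rfl

end SplitExactSeq

namespace LCFunctor

variable (H : LCFunctor)

lemma map_comp_apply {A B C : LCA} (f : LCAHom A B) (g : LCAHom B C) (x : H.obj A) :
    H.map (g.comp f) x = H.map g (H.map f x) := by
  rw [H.map_comp, AddMonoidHom.comp_apply]

lemma map_id_apply (A : LCA) (x : H.obj A) : H.map (LCAHom.id A) x = x := by
  rw [H.map_id, AddMonoidHom.id_apply]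

lemma map_apply_of_comp_eq_id {A B : LCA} {f : LCAHom A B} {g : LCAHom B A}
    (hgf : g.comp f = LCAHom.id A) (x : H.obj A) : H.map g (H.map f x) = x := by
  rw [← map_comp_apply, hgf, map_id_apply]

namespace IsSplitExact

variable {H} (hH : H.IsSplitExact)
include hH

/-- The identity sequence of the zero algebra is exact, hence so is `id : H(0) → H(0)`. -/
lemma eq_zero_of_punit (x : H.obj LCA.punit) : x = 0 := by
  have hx := ((hH SplitExactSeq.punit).2.2 x).mpr ⟨x, H.map_id_apply _ x⟩
  rwa [show SplitExactSeq.punit.π = LCAHom.id _ from rfl, map_id_apply] at hx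

lemma map_eq_zero {A B : LCA} {f : LCAHom A B} (hf : ∀ a, f.toFun a = 0) (x : H.obj A) :
    H.map f x = 0 := by
  rw [LCAHom.eq_fromPUnit_comp_toPUnit hf, map_comp_apply,
    hH.eq_zero_of_punit (H.map (LCAHom.toPUnit A) x), map_zero]

lemma eq_map_inl_add_map_inr {A B : LCA} (y : H.obj (A.prod B)) :
    y = H.map (LCAHom.inl A B) (H.map (LCAHom.fst A B) y)
      + H.map (LCAHom.inr A B) (H.map (LCAHom.snd A B) y) := by
  set z := y - H.map (LCAHom.inr A B) (H.map (LCAHom.snd A B) y)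
  have hz : H.map (LCAHom.snd A B) z = 0 := by
    rw [map_sub, H.map_apply_of_comp_eq_id (LCAHom.ext fun _ => rfl), sub_self]
  obtain ⟨w, hw⟩ := ((hH (SplitExactSeq.prod A B)).2.2 z).mp hz
  have hfst : H.map (LCAHom.fst A B) z = w := by
    rw [← hw]
    exact H.map_apply_of_comp_eq_id (LCAHom.ext fun _ => rfl) w
  have hfst' : H.map (LCAHom.fst A B) z = H.map (LCAHom.fst A B) y := by
    have hzero : ∀ b, ((LCAHom.fst A B).comp (LCAHom.inr A B)).toFun b = 0 := fun _ => rfl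
    rw [map_sub, ← H.map_comp_apply (LCAHom.inr A B), hH.map_eq_zero hzero, sub_zero]
  rw [← sub_eq_iff_eq_add, ← hfst', hfst]
  exact hw.symm

lemma map_prod {A B C : LCA} (f : LCAHom C A) (g : LCAHom C B) (x : H.obj C) :
    H.map (f.prod g) x
      = H.map (LCAHom.inl A B) (H.map f x) + H.map (LCAHom.inr A B) (H.map g x) := by
  rw [hH.eq_map_inl_add_map_inr (H.map (f.prod g) x), ← H.map_comp_apply (f.prod g),
    ← H.map_comp_apply (f.prod g)]
  rfl

end IsSplitExact

end LCFunctor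

/-- **Statement 3.** If `H` is a split exact functor on locally convex algebras
and `φ, ψ : A → B` are orthogonal continuous algebra homomorphisms, then
`H(φ + ψ) = H(φ) + H(ψ)`. -/
theorem split_exact_functor_additive_on_orthogonal
    (H : LCFunctor) (hH : H.IsSplitExact) (A B : LCA) (φ ψ : LCAHom A B)
    (h : ∀ a a', φ.toFun a * ψ.toFun a' = 0 ∧ ψ.toFun a * φ.toFun a' = 0) :
    H.map (orthSum φ ψ h) = H.map φ + H.map ψ := by
  have horth : ∀ a a', φ.toFun a * ψ.toFun a' = 0 ∧ ψ.toFun a' * φ.toFun a = 0 :=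
    fun a a' => ⟨(h a a').1, (h a' a).2⟩
  have hdiag : orthSum φ ψ h = (φ.coprod ψ horth).comp ((LCAHom.id A).prod (LCAHom.id A)) :=
    LCAHom.ext fun _ => rfl
  ext x
  rw [hdiag, H.map_comp_apply, hH.map_prod, map_add, H.map_id_apply,
    ← H.map_comp_apply, LCAHom.coprod_comp_inl, ← H.map_comp_apply, LCAHom.coprod_comp_inr,
    AddMonoidHom.add_apply]
end
end

section
/- Consider a 3×3 diagram of locally convex algebras I^i_j (i,j = 1,2,3) in which each row 0 → I^i_1 → I^i_2 → I^i_3 → 0 (with maps φ^i_{12}, φ^i_{23}) is a double split short exact sequence with splittings σ^i_{23}, σ̄^i_{23} : I^i_3 → I^i_2, and each column 0 → I^1_j → I^2_j → I^3_j → 0 (with maps φ^{12}_j, φ^{23}_j) is a double split short exact sequence with splittings σ^{23}_j, σ̄^{23}_j : I^3_j → I^2_j. Suppose all squares involving only the maps φ commute, and that φ^2_{12}∘σ^{23}_1 = σ^{23}_2∘φ^3_{12}, σ^2_{23}∘φ^1_{23} = φ^{12}_2∘σ^1_{23}, σ^{23}_2∘σ^3_{23} = σ^2_{23}∘σ^{23}_3,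 the same three relations hold with every σ replaced by σ̄, and moreover σ̄^{23}_2∘σ^3_{23} = σ^2_{23}∘σ̄^{23}_3 and σ^{23}_2∘σ̄^3_{23} = σ̄^2_{23}∘σ^{23}_3. Then for every split exact functor H from locally convex algebras to abelian groups, H(σ^{23}_1, σ̄^{23}_1) ∘ H(σ^3_{23}, σ̄^3_{23}) = H(σ^1_{23}, σ̄^1_{23}) ∘ H(σ^{23}_3, σ̄^{23}_3). -/
/-!  A framework for locally convex algebras, split exact functors,
quasihomomorphisms and locally convex Kasparov modules, following
M. Grensing, "Universal cycles and homological invariants of locally convex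
algebras". -/

noncomputable section

open scoped Topology

/-
The induced map `H(σ,σ̄)` is characterised by `H(ι) ∘ H(σ,σ̄) = H(σ) - H(σ̄)`, and `H(ι)` is
injective. Composing each side of the claimed identity with the injective map
`H(φ²₁₂) ∘ H(φ¹²₁) = H(φ¹²₂) ∘ H(φ¹₁₂)` from `H(I¹₁)` to `H(I²₂)` and pushing the splittings
through the compatibility relations turns the two sides into
`(H(σ²³₂) - H(σ̄²³₂)) ∘ (H(σ³₂₃) - H(σ̄³₂₃))` and `(H(σ²₂₃) - H(σ̄²₂₃)) ∘ (H(σ²³₃) - H(σ̄²³₃))`.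
These agree term by term: the four products of splittings are matched by the relations
`σ²³₂σ³₂₃ = σ²₂₃σ²³₃`, its barred version, and the two mixed relations.
-/

@[ext]
lemma LCAHom.ext_s4 {A B : LCA} {f g : LCAHom A B} (h : ∀ x, f.toFun x = g.toFun x) : f = g := by
  cases f
  cases g
  congr
  exact funext h

namespace LCFunctor

variable (H : LCFunctor) {A B C D : LCA}

lemma map_map (f : LCAHom A B) (g : LCAHom B C) (x : H.obj A) :
    H.map g (H.map f x) = H.map (g.comp f) x := by
  rw [H.map_comp]
  rfl

lemma map_map_of_comm {f : LCAHom A B} {g : LCAHom B D} {f' : LCAHom A C} {g' : LCAHom C D}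
    (h : ∀ a, g.toFun (f.toFun a) = g'.toFun (f'.toFun a)) (x : H.obj A) :
    H.map g (H.map f x) = H.map g' (H.map f' x) := by
  rw [map_map, map_map, LCAHom.ext_s4 (f := g.comp f) (g := g'.comp f') h]

lemma map_map_of_leftInverse {s : LCAHom A B} {p : LCAHom B A}
    (h : ∀ a, p.toFun (s.toFun a) = a) (x : H.obj A) : H.map p (H.map s x) = x := by
  rw [map_map, show p.comp s = LCAHom.id A from LCAHom.ext_s4 h, H.map_id]
  rfl

end LCFunctor

namespace DoubleSplitSeq

variable {B D A : LCA} (E : DoubleSplitSeq B D A) {H : LCFunctor}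

def toSplitExactSeq : SplitExactSeq B D A :=
  ⟨E.ι, E.π, E.σ, E.ι_inj, E.π_surj, E.exact, E.is_split⟩

lemma map_ι_injective (hH : H.IsSplitExact) : Function.Injective (H.map E.ι) :=
  (hH E.toSplitExactSeq).1

lemma map_ι_induced (hH : H.IsSplitExact) (x : H.obj A) :
    H.map E.ι (E.induced H x) = H.map E.σ x - H.map E.σ' x := by
  have hπ : H.map E.π (H.map E.σ x - H.map E.σ' x) = 0 := by
    rw [map_sub, H.map_map_of_leftInverse E.is_split, H.map_map_of_leftInverse E.is_split',
      sub_self]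
  exact Function.invFun_eq (((hH E.toSplitExactSeq).2.2 _).mp hπ)

lemma map_map_ι_induced (hH : H.IsSplitExact) {X Y : LCA} {f : LCAHom D X} {g : LCAHom A Y}
    {τ τ' : LCAHom Y X} (hσ : ∀ a, f.toFun (E.σ.toFun a) = τ.toFun (g.toFun a))
    (hσ' : ∀ a, f.toFun (E.σ'.toFun a) = τ'.toFun (g.toFun a)) (x : H.obj A) :
    H.map f (H.map E.ι (E.induced H x)) = H.map τ (H.map g x) - H.map τ' (H.map g x) := by
  rw [E.map_ι_induced hH, map_sub, H.map_map_of_comm hσ, H.map_map_of_comm hσ']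

end DoubleSplitSeq

theorem three_by_three_double_split_diagram_general
    (I11 I12 I13 I21 I22 I23 I31 I32 I33 : LCA)
    (R1 : DoubleSplitSeq I11 I12 I13) (R2 : DoubleSplitSeq I21 I22 I23)
    (R3 : DoubleSplitSeq I31 I32 I33)
    (C1 : DoubleSplitSeq I11 I21 I31) (C2 : DoubleSplitSeq I12 I22 I32)
    (C3 : DoubleSplitSeq I13 I23 I33)
    -- all squares involving only the morphisms `φ` commute:
    (hsq1 : ∀ x, C2.ι.toFun (R1.ι.toFun x) = R2.ι.toFun (C1.ι.toFun x))
    -- compatibility of the splittings `σ`: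
    (hs1 : ∀ x, R2.ι.toFun (C1.σ.toFun x) = C2.σ.toFun (R3.ι.toFun x))
    (hs2 : ∀ x, R2.σ.toFun (C3.ι.toFun x) = C2.ι.toFun (R1.σ.toFun x))
    (hs3 : ∀ x, C2.σ.toFun (R3.σ.toFun x) = R2.σ.toFun (C3.σ.toFun x))
    -- the same relations with every `σ` replaced by `σ̄`:
    (hs1' : ∀ x, R2.ι.toFun (C1.σ'.toFun x) = C2.σ'.toFun (R3.ι.toFun x))
    (hs2' : ∀ x, R2.σ'.toFun (C3.ι.toFun x) = C2.ι.toFun (R1.σ'.toFun x))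
    (hs3' : ∀ x, C2.σ'.toFun (R3.σ'.toFun x) = R2.σ'.toFun (C3.σ'.toFun x))
    -- the mixed relations:
    (hm1 : ∀ x, C2.σ'.toFun (R3.σ.toFun x) = R2.σ.toFun (C3.σ'.toFun x))
    (hm2 : ∀ x, C2.σ.toFun (R3.σ'.toFun x) = R2.σ'.toFun (C3.σ.toFun x))
    (H : LCFunctor) (hH : H.IsSplitExact) :
    ∀ x : H.obj I33,
      C1.induced H (R3.induced H x) = R1.induced H (C3.induced H x) := by
  intro x
  refine R1.map_ι_injective hH (C2.map_ι_injective hH ?_)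
  calc H.map C2.ι (H.map R1.ι (C1.induced H (R3.induced H x)))
      = H.map R2.ι (H.map C1.ι (C1.induced H (R3.induced H x))) := H.map_map_of_comm hsq1 _
    _ = (H.map C2.σ - H.map C2.σ') (H.map R3.σ x - H.map R3.σ' x) := by
      rw [C1.map_map_ι_induced hH hs1 hs1', R3.map_ι_induced hH]
      rfl
    _ = (H.map R2.σ - H.map R2.σ') (H.map C3.σ x - H.map C3.σ' x) := by
      simp only [AddMonoidHom.sub_apply, map_sub, H.map_map_of_comm hs3,
        H.map_map_of_comm hs3', H.map_map_of_comm hm1, H.map_map_of_comm hm2]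
      abel
    _ = H.map C2.ι (H.map R1.ι (R1.induced H (C3.induced H x))) := by
      rw [R1.map_map_ι_induced hH (fun a => (hs2 a).symm) (fun a => (hs2' a).symm),
        C3.map_ι_induced hH]
      rfl

/-- **Statement 9.** Given a 3×3 diagram of locally convex algebras whose rows
`Rᵢ : 0 → Iᵢ₁ → Iᵢ₂ → Iᵢ₃ → 0` and columns `Cⱼ : 0 → I₁ⱼ → I₂ⱼ → I₃ⱼ → 0` are
double split short exact sequences, such that all squares of the maps `φ`
commute and the splittings satisfy the stated compatibility relations, the
morphisms induced under any split exact functor `H` by the outer edges agree: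
`H(σ²³₁, σ̄²³₁) ∘ H(σ³₂₃, σ̄³₂₃) = H(σ¹₂₃, σ̄¹₂₃) ∘ H(σ²³₃, σ̄²³₃)`. -/
theorem three_by_three_double_split_diagram
    (I11 I12 I13 I21 I22 I23 I31 I32 I33 : LCA)
    (R1 : DoubleSplitSeq I11 I12 I13) (R2 : DoubleSplitSeq I21 I22 I23)
    (R3 : DoubleSplitSeq I31 I32 I33)
    (C1 : DoubleSplitSeq I11 I21 I31) (C2 : DoubleSplitSeq I12 I22 I32)
    (C3 : DoubleSplitSeq I13 I23 I33)
    -- all squares involving only the morphisms `φ` commute: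
    (hsq1 : ∀ x, C2.ι.toFun (R1.ι.toFun x) = R2.ι.toFun (C1.ι.toFun x))
    (hsq2 : ∀ x, C3.ι.toFun (R1.π.toFun x) = R2.π.toFun (C2.ι.toFun x))
    (hsq3 : ∀ x, C2.π.toFun (R2.ι.toFun x) = R3.ι.toFun (C1.π.toFun x))
    (hsq4 : ∀ x, C3.π.toFun (R2.π.toFun x) = R3.π.toFun (C2.π.toFun x))
    -- compatibility of the splittings `σ`:
    (hs1 : ∀ x, R2.ι.toFun (C1.σ.toFun x) = C2.σ.toFun (R3.ι.toFun x))
    (hs2 : ∀ x, R2.σ.toFun (C3.ι.toFun x) = C2.ι.toFun (R1.σ.toFun x))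
    (hs3 : ∀ x, C2.σ.toFun (R3.σ.toFun x) = R2.σ.toFun (C3.σ.toFun x))
    -- the same relations with every `σ` replaced by `σ̄`:
    (hs1' : ∀ x, R2.ι.toFun (C1.σ'.toFun x) = C2.σ'.toFun (R3.ι.toFun x))
    (hs2' : ∀ x, R2.σ'.toFun (C3.ι.toFun x) = C2.ι.toFun (R1.σ'.toFun x))
    (hs3' : ∀ x, C2.σ'.toFun (R3.σ'.toFun x) = R2.σ'.toFun (C3.σ'.toFun x))
    -- the mixed relations:
    (hm1 : ∀ x, C2.σ'.toFun (R3.σ.toFun x) = R2.σ.toFun (C3.σ'.toFun x))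
    (hm2 : ∀ x, C2.σ.toFun (R3.σ'.toFun x) = R2.σ'.toFun (C3.σ.toFun x))
    (H : LCFunctor) (hH : H.IsSplitExact) :
    ∀ x : H.obj I33,
      C1.induced H (R3.induced H x) = R1.induced H (C3.induced H x) :=
  three_by_three_double_split_diagram_general I11 I12 I13 I21 I22 I23 I31 I32 I33 R1 R2 R3 C1 C2 C3
    hsq1 hs1 hs2 hs3 hs1' hs2' hs3' hm1 hm2 H hH
end
end
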